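/- arXiv:2604.19220 — 2 statements merged into one kernel-verified Lean document; each statement's English description precedes it below -/
import Mathlib

section
/- The following hold as n → ∞. (i) If 0 < c < ∞ and there exists an increasing function L : [0,∞) → [0,∞) with L(n) = l_n for all n ∈ ℕ and L(tx)/L(t) → x^c as t → ∞ for every x > 0, then for every t ∈ [0,1], P(τ_n/n ≤ t) → t^c; that is, τ_n/n converges in distribution to the Beta(c,1) distribution. (ii) If there exists a nondecreasing L with L(n) = l_n and L(tx)/L(t) → 1 as t → ∞ for every x > 0 (slow variation, c = 0), then τ_n/n → 0 in probability. (iii) If there exists a nondecreasing L with L(n) = l_n such that L(tx)/L(t) → 0 for every 0 < x < 1 and L(tx)/L(t) → ∞ for every x > 1 as t → ∞ (c = ∞), then τ_n/n → 1 in probability. -/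
open MeasureTheory Filter Set Topology
open scoped ENNReal

/-- `τ_n = max {k ≤ n : ε_k = 1}`, with `τ_n = 0` if no such `k` exists. -/
def tauProc {Ω : Type*} (ε : ℕ → Ω → ℕ) (n : ℕ) (ω : Ω) : ℕ :=
  ((Finset.Icc 1 n).filter fun k => ε k ω = 1).sup id

/-!
Since `τ_n ≤ m` says exactly that none of `ε_{m+1}, …, ε_n` equals `1`, independence gives the
telescoping product `P(τ_n ≤ m) = ∏_{k=m+1}^{n} l_{k-1}/l_k = l_m/l_n`, so
`P(τ_n/n ≤ t) = l_{⌊nt⌋}/l_n`. By monotonicity of `L` this ratio lies between `L(ns)/L(n)` and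
`L(nt)/L(n)` for large `n` and any `s < t`; the limits `s^c`, `1` and `0` of these bounds
give the three cases.
-/

section Approximation

variable {ι β α : Type*} [TopologicalSpace α] [LinearOrder α] {f : Filter ι} {p : Filter β}
  [p.NeBot] {a : ι → α} {b : β → ι → α} {g : β → α} {y : α}

theorem eventually_const_lt_of_approx [ClosedIicTopology α] (hg : Tendsto g p (𝓝 y))
    (hb : ∀ᶠ s in p, Tendsto (b s) f (𝓝 (g s))) (hba : ∀ᶠ s in p, ∀ᶠ i in f, b s i ≤ a i)
    {u : α} (hu : u < y) : ∀ᶠ i in f, u < a i := by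
  obtain ⟨s, hus, hbs, hsa⟩ := ((hg.eventually_const_lt hu).and (hb.and hba)).exists
  filter_upwards [hbs.eventually_const_lt hus, hsa] with i hub hai using hub.trans_le hai

theorem eventually_lt_const_of_approx [ClosedIciTopology α] (hg : Tendsto g p (𝓝 y))
    (hb : ∀ᶠ s in p, Tendsto (b s) f (𝓝 (g s))) (hab : ∀ᶠ s in p, ∀ᶠ i in f, a i ≤ b s i)
    {u : α} (hu : y < u) : ∀ᶠ i in f, a i < u := by
  obtain ⟨s, hsu, hbs, hsa⟩ := ((hg.eventually_lt_const hu).and (hb.and hab)).exists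
  filter_upwards [hbs.eventually_lt_const hsu, hsa] with i hbu hia using hia.trans_lt hbu

end Approximation

theorem prod_Ioc_div_eq_div {K : Type*} [Field K] {f : ℕ → K} (hf : ∀ k, f k ≠ 0) {m n : ℕ}
    (hmn : m ≤ n) : ∏ k ∈ Finset.Ioc m n, f (k - 1) / f k = f m / f n := by
  induction n, hmn using Nat.le_induction with
  | base => simp [div_self (hf m)]
  | succ n hmn ih =>
    rw [Finset.prod_Ioc_succ_top hmn, ih, Nat.add_sub_cancel, div_mul_div_cancel₀ (hf n)]

section ConvergenceToConstant

variable {Ω ι : Type*} [MeasurableSpace Ω] {ℙ : Measure Ω} {f : Filter ι} {X : ι → Ω → ℝ}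

theorem tendstoInMeasure_zero_of_measure_le_tendsto_one [IsProbabilityMeasure ℙ]
    (hX : ∀ i, Measurable (X i)) (hX0 : ∀ i ω, 0 ≤ X i ω)
    (h : ∀ᶠ s in 𝓝[>] 0, Tendsto (fun i => ℙ {ω | X i ω ≤ s}) f (𝓝 1)) :
    TendstoInMeasure ℙ X f fun _ => 0 := by
  refine tendstoInMeasure_iff_dist.2 fun δ hδ => ?_
  obtain ⟨s, hs, hsδ⟩ := (h.and (Ioo_mem_nhdsGT hδ)).exists
  have hcompl : Tendsto (fun i => ℙ {ω | X i ω ≤ s}ᶜ) f (𝓝 0) := by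
    simp_rw [prob_compl_eq_one_sub (measurableSet_le (hX _) measurable_const)]
    simpa using ENNReal.Tendsto.sub tendsto_const_nhds hs (Or.inl ENNReal.one_ne_top)
  refine tendsto_of_tendsto_of_tendsto_of_le_of_le tendsto_const_nhds hcompl (fun _ => zero_le)
    fun i => measure_mono fun ω hω => ?_
  simp only [mem_ofPred_eq, Real.dist_eq, sub_zero, abs_of_nonneg (hX0 i ω)] at hω
  exact not_le.2 (hsδ.2.trans_le hω)

theorem tendstoInMeasure_one_of_measure_le_tendsto_zero (hX1 : ∀ i ω, X i ω ≤ 1)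
    (h : ∀ᶠ s in 𝓝[<] 1, Tendsto (fun i => ℙ {ω | X i ω ≤ s}) f (𝓝 0)) :
    TendstoInMeasure ℙ X f fun _ => 1 := by
  refine tendstoInMeasure_iff_dist.2 fun δ hδ => ?_
  obtain ⟨s, hs, hsδ⟩ := (h.and (Ioo_mem_nhdsLT (sub_lt_self 1 hδ))).exists
  refine tendsto_of_tendsto_of_tendsto_of_le_of_le tendsto_const_nhds hs (fun _ => zero_le)
    fun i => measure_mono fun ω hω => ?_
  simp only [mem_ofPred_eq, Real.dist_eq, abs_of_nonpos (sub_nonpos.2 (hX1 i ω))] at hω ⊢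
  linarith [hsδ.1]

end ConvergenceToConstant

section Tau

variable {Ω : Type*} {ε : ℕ → Ω → ℕ}

theorem tauProc_le_iff {n m : ℕ} {ω : Ω} :
    tauProc ε n ω ≤ m ↔ ∀ k ∈ Finset.Ioc m n, ε k ω ≠ 1 := by
  simp only [tauProc, Finset.sup_le_iff, Finset.mem_filter, Finset.mem_Icc, Finset.mem_Ioc, id]
  constructor <;> intro h k <;> have := h k <;> omega

theorem tauProc_le_self (n : ℕ) (ω : Ω) : tauProc ε n ω ≤ n :=
  tauProc_le_iff.2 fun k hk => by simp at hk

theorem setOf_tauProc_le (n m : ℕ) :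
    {ω | tauProc ε n ω ≤ m} = ⋂ k ∈ Finset.Ioc m n, {ω | ε k ω ≠ 1} := by
  ext ω
  simp [tauProc_le_iff]

theorem tauProc_div_le_iff {n : ℕ} {s : ℝ} (hs : 0 ≤ s) {ω : Ω} :
    (tauProc ε n ω : ℝ) / n ≤ s ↔ tauProc ε n ω ≤ ⌊n * s⌋₊ := by
  rcases n.eq_zero_or_pos with rfl | hn
  · simp [hs, Nat.le_zero.1 (tauProc_le_self 0 ω)]
  · rw [div_le_iff₀ (by exact_mod_cast hn), Nat.le_floor_iff (by positivity), mul_comm]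

variable [MeasurableSpace Ω]

theorem measurable_tauProc (hε : ∀ k, Measurable (ε k)) (n : ℕ) : Measurable (tauProc ε n) :=
  measurable_of_Iic fun m => by
    simp only [preimage, mem_Iic, setOf_tauProc_le]
    exact Finset.measurableSet_biInter _ fun k _ => (hε k (measurableSet_singleton 1)).compl

variable {ℙ : Measure Ω} [IsProbabilityMeasure ℙ] {l : ℕ → ℝ}

theorem measure_tauProc_le (hl_pos : ∀ n, 0 < l n) (hl_mono : Monotone l)
    (hε_meas : ∀ n, Measurable (ε n))
    (hε_dist : ∀ n : ℕ, 1 ≤ n →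
      ℙ {ω | ε n ω = 1} = ENNReal.ofReal (1 - l (n - 1) / l n))
    (hindep : ProbabilityTheory.iIndepFun
      (m := fun _ : ℕ => (inferInstance : MeasurableSpace ℕ)) ε ℙ)
    {m n : ℕ} (hmn : m ≤ n) :
    ℙ {ω | tauProc ε n ω ≤ m} = ENNReal.ofReal (l m / l n) := by
  have hfactor : ∀ k ∈ Finset.Ioc m n, ℙ {ω | ε k ω ≠ 1} = ENNReal.ofReal (l (k - 1) / l k) := by
    intro k hk
    have hk1 : 1 ≤ k := by simp at hk; omega
    have hratio_le : l (k - 1) / l k ≤ 1 := div_le_one_of_le₀ (hl_mono (by omega)) (hl_pos k).le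
    rw [← compl_ofPred,
      prob_compl_eq_one_sub (s := {ω | ε k ω = 1}) (hε_meas k (measurableSet_singleton 1)),
      hε_dist k hk1, ← ENNReal.ofReal_one, ← ENNReal.ofReal_sub _ (by linarith), sub_sub_cancel]
  rw [setOf_tauProc_le, hindep.meas_biInter (s := fun k => {ω | ε k ω ≠ 1}) fun k _ =>
       ⟨{1}ᶜ, (measurableSet_singleton 1).compl, rfl⟩,
    Finset.prod_congr rfl hfactor,
    ← ENNReal.ofReal_prod_of_nonneg fun k _ => (div_pos (hl_pos _) (hl_pos _)).le,
    prod_Ioc_div_eq_div (fun k => (hl_pos k).ne') hmn]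

theorem measure_tauProc_div_le (hl_pos : ∀ n, 0 < l n) (hl_mono : Monotone l)
    (hε_meas : ∀ n, Measurable (ε n))
    (hε_dist : ∀ n : ℕ, 1 ≤ n →
      ℙ {ω | ε n ω = 1} = ENNReal.ofReal (1 - l (n - 1) / l n))
    (hindep : ProbabilityTheory.iIndepFun
      (m := fun _ : ℕ => (inferInstance : MeasurableSpace ℕ)) ε ℙ)
    (n : ℕ) {s : ℝ} (hs : s ∈ Icc (0 : ℝ) 1) :
    ℙ {ω | (tauProc ε n ω : ℝ) / n ≤ s} = ENNReal.ofReal (l ⌊n * s⌋₊ / l n) := by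
  simp_rw [tauProc_div_le_iff hs.1]
  exact measure_tauProc_le hl_pos hl_mono hε_meas hε_dist hindep
    (Nat.floor_le_of_le (mul_le_of_le_one_right n.cast_nonneg hs.2))

end Tau

section RegularVariation

variable {l : ℕ → ℝ} {L : ℝ → ℝ}

theorem ratio_floor_le_ratio (hl_pos : ∀ n, 0 < l n) (hL : MonotoneOn L (Ici 0))
    (hLl : ∀ n : ℕ, L n = l n) {s t : ℝ} (ht : 0 ≤ t) (hts : t ≤ s) (n : ℕ) :
    l ⌊n * t⌋₊ / l n ≤ L (n * s) / L n := by
  have hs : 0 ≤ s := ht.trans hts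
  have hfloor : (⌊n * t⌋₊ : ℝ) ≤ n * s := (Nat.floor_le (by positivity)).trans (by gcongr)
  rw [← hLl, ← hLl]
  exact div_le_div_of_nonneg_right
    (hL (mem_Ici.2 (Nat.cast_nonneg _)) (mem_Ici.2 (by positivity)) hfloor) (hLl n ▸ hl_pos n).le

theorem eventually_ratio_le_ratio_floor (hl_pos : ∀ n, 0 < l n) (hL : MonotoneOn L (Ici 0))
    (hLl : ∀ n : ℕ, L n = l n) {s t : ℝ} (hs : 0 ≤ s) (hst : s < t) :
    ∀ᶠ n : ℕ in atTop, L (n * s) / L n ≤ l ⌊n * t⌋₊ / l n := by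
  filter_upwards [tendsto_natCast_atTop_atTop.eventually_ge_atTop (1 / (t - s))] with n hn
  have hgap : 1 ≤ n * (t - s) := by rwa [div_le_iff₀ (sub_pos.2 hst)] at hn
  have hfloor : n * s ≤ ⌊n * t⌋₊ := by
    linarith [Nat.sub_one_lt_floor ((n : ℝ) * t)]
  rw [← hLl, ← hLl]
  exact div_le_div_of_nonneg_right
    (hL (mem_Ici.2 (by positivity)) (mem_Ici.2 (Nat.cast_nonneg _)) hfloor) (hLl n ▸ hl_pos n).le

theorem tendsto_ratio_floor_rpow (hl_pos : ∀ n, 0 < l n) (hL : MonotoneOn L (Ici 0))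
    (hLl : ∀ n : ℕ, L n = l n) {c : ℝ} (hc : 0 < c)
    (hlim : ∀ x : ℝ, 0 < x → Tendsto (fun n : ℕ => L (n * x) / L n) atTop (𝓝 (x ^ c)))
    {t : ℝ} (ht : t ∈ Icc (0 : ℝ) 1) :
    Tendsto (fun n : ℕ => l ⌊n * t⌋₊ / l n) atTop (𝓝 (t ^ c)) := by
  have hcont : Tendsto (fun x : ℝ => x ^ c) (𝓝 t) (𝓝 (t ^ c)) :=
    (Real.continuousAt_rpow_const t c (Or.inr hc.le)).tendsto
  refine tendsto_order.2 ⟨fun u hu => ?_, fun u hu => ?_⟩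
  · rcases ht.1.eq_or_lt with rfl | ht0
    · rw [Real.zero_rpow hc.ne'] at hu
      exact Eventually.of_forall fun n => hu.trans_le (div_pos (hl_pos _) (hl_pos _)).le
    refine eventually_const_lt_of_approx (p := 𝓝[<] t)
      (b := fun (s : ℝ) (n : ℕ) => L (n * s) / L n) (hcont.mono_left nhdsWithin_le_nhds) ?_ ?_ hu
    all_goals filter_upwards [Ioo_mem_nhdsLT ht0] with s hs
    · exact hlim s hs.1
    · exact eventually_ratio_le_ratio_floor hl_pos hL hLl hs.1.le hs.2
  · refine eventually_lt_const_of_approx (p := 𝓝[>] t)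
      (b := fun (s : ℝ) (n : ℕ) => L (n * s) / L n) (hcont.mono_left nhdsWithin_le_nhds) ?_ ?_ hu
    all_goals filter_upwards [self_mem_nhdsWithin] with s (hs : t < s)
    · exact hlim s (ht.1.trans_lt hs)
    · exact Eventually.of_forall (ratio_floor_le_ratio hl_pos hL hLl ht.1 hs.le)

theorem tendsto_ratio_floor_one (hl_pos : ∀ n, 0 < l n) (hl_mono : Monotone l)
    (hL : MonotoneOn L (Ici 0)) (hLl : ∀ n : ℕ, L n = l n)
    (hlim : ∀ x : ℝ, 0 < x → Tendsto (fun n : ℕ => L (n * x) / L n) atTop (𝓝 1))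
    {t : ℝ} (ht : t ∈ Ioo (0 : ℝ) 1) :
    Tendsto (fun n : ℕ => l ⌊n * t⌋₊ / l n) atTop (𝓝 1) := by
  refine tendsto_of_tendsto_of_tendsto_of_le_of_le' (hlim (t / 2) (by linarith [ht.1]))
    tendsto_const_nhds
    (eventually_ratio_le_ratio_floor hl_pos hL hLl (by linarith [ht.1]) (by linarith [ht.1]))
    (Eventually.of_forall fun n => div_le_one_of_le₀ (hl_mono ?_) (hl_pos n).le)
  exact Nat.floor_le_of_le (mul_le_of_le_one_right n.cast_nonneg ht.2.le)

theorem tendsto_ratio_floor_zero (hl_pos : ∀ n, 0 < l n) (hL : MonotoneOn L (Ici 0))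
    (hLl : ∀ n : ℕ, L n = l n) {t : ℝ} (ht : 0 ≤ t)
    (hlim : Tendsto (fun n : ℕ => L (n * t) / L n) atTop (𝓝 0)) :
    Tendsto (fun n : ℕ => l ⌊n * t⌋₊ / l n) atTop (𝓝 0) :=
  tendsto_of_tendsto_of_tendsto_of_le_of_le tendsto_const_nhds hlim
    (fun _ => (div_pos (hl_pos _) (hl_pos _)).le) (ratio_floor_le_ratio hl_pos hL hLl ht le_rfl)

end RegularVariation

theorem tau_div_n_limit_general
    {Ω : Type*} [MeasurableSpace Ω] (ℙ : Measure Ω) [IsProbabilityMeasure ℙ]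
    (l : ℕ → ℝ) (hl_pos : ∀ n, 0 < l n) (hl_mono : Monotone l)
    (ε : ℕ → Ω → ℕ)
    (hε_meas : ∀ n, Measurable (ε n))
    (hε_dist : ∀ n : ℕ, 1 ≤ n →
      ℙ {ω | ε n ω = 1} = ENNReal.ofReal (1 - l (n - 1) / l n))
    (hindep : ProbabilityTheory.iIndepFun
      (m := fun _ : ℕ => (inferInstance : MeasurableSpace ℕ)) ε ℙ) :
    -- (i) regularly varying case, `0 < c < ∞`
    (∀ c : ℝ, 0 < c →
      ∀ L : ℝ → ℝ, (∀ x : ℝ, 0 ≤ x → 0 ≤ L x) → StrictMonoOn L (Ici (0:ℝ)) →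
        (∀ n : ℕ, L n = l n) →
        (∀ x : ℝ, 0 < x →
          Tendsto (fun t : ℝ => L (t * x) / L t) atTop (nhds (x ^ c))) →
        ∀ t : ℝ, t ∈ Icc (0:ℝ) 1 →
          Tendsto (fun n : ℕ =>
              (ℙ {ω | (tauProc ε n ω : ℝ) / n ≤ t}).toReal) atTop (nhds (t ^ c))) ∧
    -- (ii) slowly varying case, `c = 0`
    ((∃ L : ℝ → ℝ, (∀ x : ℝ, 0 ≤ x → 0 ≤ L x) ∧ MonotoneOn L (Ici (0:ℝ)) ∧
        (∀ n : ℕ, L n = l n) ∧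
        (∀ x : ℝ, 0 < x → Tendsto (fun t : ℝ => L (t * x) / L t) atTop (nhds 1))) →
      TendstoInMeasure ℙ (fun (n : ℕ) (ω : Ω) => (tauProc ε n ω : ℝ) / n) atTop
        (fun _ => (0:ℝ))) ∧
    -- (iii) fast increments case, `c = ∞`
    ((∃ L : ℝ → ℝ, (∀ x : ℝ, 0 ≤ x → 0 ≤ L x) ∧ MonotoneOn L (Ici (0:ℝ)) ∧
        (∀ n : ℕ, L n = l n) ∧
        (∀ x : ℝ, 0 < x → x < 1 →
          Tendsto (fun t : ℝ => L (t * x) / L t) atTop (nhds 0)) ∧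
        (∀ x : ℝ, 1 < x →
          Tendsto (fun t : ℝ => L (t * x) / L t) atTop atTop)) →
      TendstoInMeasure ℙ (fun (n : ℕ) (ω : Ω) => (tauProc ε n ω : ℝ) / n) atTop
        (fun _ => (1:ℝ))) := by
  have hcdf (n : ℕ) {s : ℝ} (hs : s ∈ Icc (0 : ℝ) 1) :
      ℙ {ω | (tauProc ε n ω : ℝ) / n ≤ s} = ENNReal.ofReal (l ⌊n * s⌋₊ / l n) :=
    measure_tauProc_div_le hl_pos hl_mono hε_meas hε_dist hindep n hs
  refine ⟨fun c hc L _ hL hLl hlim t ht => ?_, ?_, ?_⟩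
  · refine (tendsto_ratio_floor_rpow hl_pos hL.monotoneOn hLl hc
      (fun x hx => (hlim x hx).comp tendsto_natCast_atTop_atTop) ht).congr fun n => ?_
    rw [hcdf n ht, ENNReal.toReal_ofReal (div_pos (hl_pos _) (hl_pos _)).le]
  · rintro ⟨L, -, hL, hLl, hlim⟩
    refine tendstoInMeasure_zero_of_measure_le_tendsto_one
      (fun n => (measurable_from_nat.comp (measurable_tauProc hε_meas n)).div_const _)
      (fun n ω => by positivity) ?_
    filter_upwards [Ioo_mem_nhdsGT one_pos] with s hs
    have := ENNReal.tendsto_ofReal (tendsto_ratio_floor_one hl_pos hl_mono hL hLl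
      (fun x hx => (hlim x hx).comp tendsto_natCast_atTop_atTop) hs)
    rw [ENNReal.ofReal_one] at this
    exact this.congr fun n => (hcdf n (Ioo_subset_Icc_self hs)).symm
  · rintro ⟨L, -, hL, hLl, hlim, -⟩
    refine tendstoInMeasure_one_of_measure_le_tendsto_zero
      (fun n ω => div_le_one_of_le₀ (by exact_mod_cast tauProc_le_self n ω) n.cast_nonneg) ?_
    filter_upwards [Ioo_mem_nhdsLT one_pos] with s hs
    have := ENNReal.tendsto_ofReal (tendsto_ratio_floor_zero hl_pos hL hLl hs.1.le
      ((hlim s hs.1 hs.2).comp tendsto_natCast_atTop_atTop))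
    rw [ENNReal.ofReal_zero] at this
    exact this.congr fun n => (hcdf n (Ioo_subset_Icc_self hs)).symm

/-- Limit behavior of `τ_n/n`: (i) in the regularly varying case with index `c ∈ (0,∞)`,
`P(τ_n/n ≤ t) → t^c` for all `t ∈ [0,1]` (Beta(c,1) limit); (ii) in the slowly varying
case `τ_n/n → 0` in probability; (iii) in the fast increments case `τ_n/n → 1` in
probability. -/
theorem tau_div_n_limit
    {Ω : Type*} [MeasurableSpace Ω] (ℙ : Measure Ω) [IsProbabilityMeasure ℙ]
    (l : ℕ → ℝ) (hl_pos : ∀ n, 0 < l n) (hl_mono : Monotone l)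
    (ε : ℕ → Ω → ℕ)
    (hε_le : ∀ n ω, ε n ω ≤ 1) (hε_meas : ∀ n, Measurable (ε n))
    (hε_dist : ∀ n : ℕ, 1 ≤ n →
      ℙ {ω | ε n ω = 1} = ENNReal.ofReal (1 - l (n - 1) / l n))
    (hindep : ProbabilityTheory.iIndepFun
      (m := fun _ : ℕ => (inferInstance : MeasurableSpace ℕ)) ε ℙ) :
    -- (i) regularly varying case, `0 < c < ∞`
    (∀ c : ℝ, 0 < c →
      ∀ L : ℝ → ℝ, (∀ x : ℝ, 0 ≤ x → 0 ≤ L x) → StrictMonoOn L (Ici (0:ℝ)) →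
        (∀ n : ℕ, L n = l n) →
        (∀ x : ℝ, 0 < x →
          Tendsto (fun t : ℝ => L (t * x) / L t) atTop (nhds (x ^ c))) →
        ∀ t : ℝ, t ∈ Icc (0:ℝ) 1 →
          Tendsto (fun n : ℕ =>
              (ℙ {ω | (tauProc ε n ω : ℝ) / n ≤ t}).toReal) atTop (nhds (t ^ c))) ∧
    -- (ii) slowly varying case, `c = 0`
    ((∃ L : ℝ → ℝ, (∀ x : ℝ, 0 ≤ x → 0 ≤ L x) ∧ MonotoneOn L (Ici (0:ℝ)) ∧
        (∀ n : ℕ, L n = l n) ∧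
        (∀ x : ℝ, 0 < x → Tendsto (fun t : ℝ => L (t * x) / L t) atTop (nhds 1))) →
      TendstoInMeasure ℙ (fun (n : ℕ) (ω : Ω) => (tauProc ε n ω : ℝ) / n) atTop
        (fun _ => (0:ℝ))) ∧
    -- (iii) fast increments case, `c = ∞`
    ((∃ L : ℝ → ℝ, (∀ x : ℝ, 0 ≤ x → 0 ≤ L x) ∧ MonotoneOn L (Ici (0:ℝ)) ∧
        (∀ n : ℕ, L n = l n) ∧
        (∀ x : ℝ, 0 < x → x < 1 →
          Tendsto (fun t : ℝ => L (t * x) / L t) atTop (nhds 0)) ∧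
        (∀ x : ℝ, 1 < x →
          Tendsto (fun t : ℝ => L (t * x) / L t) atTop atTop)) →
      TendstoInMeasure ℙ (fun (n : ℕ) (ω : Ω) => (tauProc ε n ω : ℝ) / n) atTop
        (fun _ => (1:ℝ))) :=
  tau_div_n_limit_general ℙ l hl_pos hl_mono ε hε_meas hε_dist hindep
end

section
/- (Deterministic stratified fragmentation, slowly varying case.) Suppose p_{n,k} = p_n for all 1 ≤ k ≤ n, where (p_n)_{n≥1} is a sequence in [0,1] with (1/n) Σ_{k=1}^n p_k → p̄ as n → ∞. Assume there exists a nondecreasing function L : [0,∞) → [0,∞) with L(n) = l_n for all n ∈ ℕ and L(tx)/L(t) → 1 as t → ∞ for every x > 0 (l_n slowly varying, c = 0). Then the empirical measures g_n converge weakly on [0,1] to p̄ δ_0 + (1 − p̄) δ_1 as n → ∞. -/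
open MeasureTheory Filter Set
open scoped ENNReal

/-!
Read backwards in time, the recursion says that `a n k` is an average of earlier break points
along a walk that moves from `k` to `k - 1` with probability `p m` at generation `m`, and is
stopped on the sides `k = 0` and `k = m + 1`. Summing the recursion over `k` telescopes, and
slow variation of `l` makes the boundary drift negligible: the mean of `g_n` tends to `1 - p̄`.
A walk started at `k ≤ (p̄ - ε) n` hits `0` before going back to generation `ε n / 4`, except
on an exponentially small event (a Chernoff bound, encoded in the barrier `min 1 expWeight`), so
a proportion `p̄ - ε` of the `α_{n,k}` lies below `ε`. Together with the mean this forces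
`(1/n) Σ α (1 - α) → 0`, and every continuous `f` is within `E + C x (1 - x)` of its chord on
`[0, 1]`.
-/

/-- The empirical measure `g_n = (1/n) Σ_{k=1}^n δ_{α_{n,k}}` of the normalized break
points `α_{n,k} = (a_{n,k} - a_{n,0})/l_n`. -/
noncomputable def empiricalMeasure (α : ℕ → ℕ → ℝ) (n : ℕ) : Measure ℝ :=
  ((n : ℝ≥0∞))⁻¹ • ∑ k ∈ Finset.Icc 1 n, Measure.dirac (α n k)

open Finset in
theorem Finset.sum_Icc_one_eq_sum_range {M : Type*} [AddCommMonoid M] (f : ℕ → M) (n : ℕ) :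
    ∑ k ∈ Icc 1 n, f k = ∑ k ∈ range n, f (k + 1) := by
  rw [← Ico_add_one_right_eq_Icc, range_eq_Ico, sum_Ico_add' f 0 n 1]

theorem Real.prod_one_sub_le_exp_neg_sum {ι : Type*} (s : Finset ι) {y : ι → ℝ}
    (hy : ∀ i ∈ s, y i ≤ 1) : ∏ i ∈ s, (1 - y i) ≤ Real.exp (-∑ i ∈ s, y i) := by
  rw [← Finset.sum_neg_distrib, Real.exp_sum]
  exact Finset.prod_le_prod (fun i hi => sub_nonneg.2 (hy i hi))
    fun i _ => Real.one_sub_le_exp_neg _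

theorem convex_comb_min_one_le {t x y : ℝ} (ht : t ∈ Icc (0 : ℝ) 1) :
    t * min 1 x + (1 - t) * min 1 y ≤ min 1 (t * x + (1 - t) * y) := by
  rw [mul_min_of_nonneg _ _ ht.1, mul_min_of_nonneg _ _ (sub_nonneg.2 ht.2), mul_one, mul_one]
  calc min t (t * x) + min (1 - t) ((1 - t) * y) ≤ min (t + (1 - t)) (t * x + (1 - t) * y) :=
        min_add_min_le_min_add_add
    _ = min 1 (t * x + (1 - t) * y) := by rw [add_sub_cancel]

theorem mem_Icc_of_tendsto_average {p : ℕ → ℝ} (hp : ∀ n, p n ∈ Icc (0 : ℝ) 1) {c : ℝ}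
    (h : Tendsto (fun n : ℕ => (∑ k ∈ Finset.Icc 1 n, p k) / n) atTop (nhds c)) :
    c ∈ Icc (0 : ℝ) 1 :=
  isClosed_Icc.mem_of_tendsto h <| Eventually.of_forall fun n =>
    ⟨div_nonneg (Finset.sum_nonneg fun k _ => (hp k).1) n.cast_nonneg,
      div_le_one_of_le₀ ((Finset.sum_le_sum fun k _ => (hp k).2).trans (by simp)) n.cast_nonneg⟩

/-- The splitting recursion with both indices shifted by one, so that no truncated subtraction
occurs. -/
def SplitRecursion (p : ℕ → ℝ) (a : ℕ → ℕ → ℝ) : Prop :=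
  ∀ n k, k ≤ n → a (n + 1) (k + 1) = p (n + 1) * a n k + (1 - p (n + 1)) * a n (k + 1)

namespace SplitRecursion

open Finset

variable {p : ℕ → ℝ} {a : ℕ → ℕ → ℝ}

theorem le_add_one (h : SplitRecursion p a) (hp : ∀ n, p n ∈ Set.Icc (0 : ℝ) 1)
    (hleft : Antitone fun n => a n 0) (hright : Monotone fun n => a n (n + 1))
    (h0 : a 0 0 ≤ a 0 1) : ∀ n k, k ≤ n → a n k ≤ a n (k + 1) := by
  intro n
  induction n with
  | zero => intro k hk; rw [Nat.le_zero.1 hk]; exact h0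
  | succ n ih =>
    intro k hk
    obtain ⟨hp0, hp1⟩ := hp (n + 1)
    rcases k with _ | k
    · have : a (n + 1) 0 ≤ a n 0 := hleft n.le_succ
      rw [h n 0 n.zero_le]
      nlinarith [ih 0 n.zero_le]
    · rcases (Nat.succ_le_succ_iff.1 hk).lt_or_eq with hk | rfl
      · rw [h n k hk.le, h n (k + 1) hk]
        nlinarith [ih k hk.le, ih (k + 1) hk]
      · have : a k (k + 1) ≤ a (k + 1) (k + 1 + 1) := hright k.le_succ
        rw [h k k le_rfl]
        nlinarith [ih k le_rfl]

theorem monotoneOn (h : SplitRecursion p a) (hp : ∀ n, p n ∈ Set.Icc (0 : ℝ) 1)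
    (hleft : Antitone fun n => a n 0) (hright : Monotone fun n => a n (n + 1))
    (h0 : a 0 0 ≤ a 0 1) (n : ℕ) : MonotoneOn (a n) (Set.Iic (n + 1)) :=
  monotoneOn_of_le_add_one Set.ordConnected_Iic fun k _ _ hk =>
    h.le_add_one hp hleft hright h0 n k (by simpa using hk)

theorem sum_range_eq (h : SplitRecursion p a) (n : ℕ) :
    ∑ k ∈ range n, a n (k + 1) =
      ∑ m ∈ range n, (p (m + 1) * a m 0 + (1 - p (m + 1)) * a m (m + 1)) := by
  induction n with
  | zero => simp
  | succ n ih =>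
    rw [sum_range_succ (fun m => p (m + 1) * a m 0 + (1 - p (m + 1)) * a m (m + 1)) n, ← ih,
      sum_congr rfl fun k hk => h n k (mem_range_succ_iff.1 hk), sum_add_distrib, ← mul_sum,
      ← mul_sum, sum_range_succ' (fun k => a n k), sum_range_succ (fun k => a n (k + 1))]
    ring

theorem abs_sum_sub_le (h : SplitRecursion p a) (hp : ∀ n, p n ∈ Set.Icc (0 : ℝ) 1)
    (hleft : Antitone fun n => a n 0) (hright : Monotone fun n => a n (n + 1))
    {l : ℕ → ℝ} (hl : ∀ n, l n = a n (n + 1) - a n 0) (n : ℕ) :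
    |∑ k ∈ range n, (a n (k + 1) - a n 0) - l n * ∑ m ∈ range n, (1 - p (m + 1))| ≤
      ∑ m ∈ range n, (l n - l m) := by
  have hsplit : ∑ k ∈ range n, (a n (k + 1) - a n 0) - l n * ∑ m ∈ range n, (1 - p (m + 1)) =
      ∑ m ∈ range n, ((a m 0 - a n 0) - (1 - p (m + 1)) * (l n - l m)) := by
    rw [sum_sub_distrib, h.sum_range_eq, mul_sum, ← sum_sub_distrib, ← sum_sub_distrib]
    refine sum_congr rfl fun m _ => ?_
    rw [hl, hl]
    ring
  rw [hsplit]
  refine (abs_sum_le_sum_abs _ _).trans (sum_le_sum fun m hm => abs_le.2 ?_)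
  have hmn : m ≤ n := (mem_range.1 hm).le
  have hl' : l m ≤ l n := by
    rw [hl, hl]; linarith [hleft hmn, hright hmn]
  obtain ⟨hp0, hp1⟩ := hp (m + 1)
  constructor <;> nlinarith [hleft hmn, hright hmn, hl m, hl n]

theorem le_of_supersolution (h : SplitRecursion p a) (hp : ∀ n, p n ∈ Set.Icc (0 : ℝ) 1)
    {b : ℕ → ℕ → ℝ} {n₀ n : ℕ}
    (hsup : ∀ m, n₀ ≤ m → ∀ k ≤ m,
      p (m + 1) * b m k + (1 - p (m + 1)) * b m (k + 1) ≤ b (m + 1) (k + 1))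
    (hinit : ∀ k ≤ n₀ + 1, a n₀ k ≤ b n₀ k)
    (hleft : ∀ m ∈ Set.Ioc n₀ n, a m 0 ≤ b m 0)
    (hright : ∀ m ∈ Set.Ioc n₀ n, a m (m + 1) ≤ b m (m + 1)) :
    ∀ m ∈ Set.Icc n₀ n, ∀ k ≤ m + 1, a m k ≤ b m k := by
  rintro m ⟨hm₀, hmn⟩
  induction m, hm₀ using Nat.le_induction with
  | base => exact hinit
  | succ m hm ih =>
    intro k hk
    rcases k with _ | k
    · exact hleft (m + 1) ⟨by omega, hmn⟩
    rcases (Nat.succ_le_succ_iff.1 hk).lt_or_eq with hk | rfl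
    · obtain ⟨hp0, hp1⟩ := hp (m + 1)
      have ih := ih (by omega)
      rw [h m k (by omega)]
      calc p (m + 1) * a m k + (1 - p (m + 1)) * a m (k + 1)
          ≤ p (m + 1) * b m k + (1 - p (m + 1)) * b m (k + 1) :=
            add_le_add (mul_le_mul_of_nonneg_left (ih k (by omega)) hp0)
              (mul_le_mul_of_nonneg_left (ih (k + 1) hk) (by linarith))
        _ ≤ b (m + 1) (k + 1) := hsup m hm k (by omega)
    · exact hright (m + 1) ⟨by omega, hmn⟩

theorem monotoneOn_div (h : SplitRecursion p a) (hp : ∀ n, p n ∈ Set.Icc (0 : ℝ) 1)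
    (hleft : Antitone fun n => a n 0) (hright : Monotone fun n => a n (n + 1))
    (h0 : a 0 0 ≤ a 0 1) {l : ℕ → ℝ} (hl_pos : ∀ n, 0 < l n) (n : ℕ) :
    MonotoneOn (fun k => (a n k - a n 0) / l n) (Set.Iic (n + 1)) := fun _ hj _ hk hjk =>
  div_le_div_of_nonneg_right (sub_le_sub_right (h.monotoneOn hp hleft hright h0 n hj hk hjk) _)
    (hl_pos n).le

theorem div_mem_Icc (h : SplitRecursion p a) (hp : ∀ n, p n ∈ Set.Icc (0 : ℝ) 1)
    (hleft : Antitone fun n => a n 0) (hright : Monotone fun n => a n (n + 1))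
    (h0 : a 0 0 ≤ a 0 1) {l : ℕ → ℝ} (hl : ∀ n, l n = a n (n + 1) - a n 0)
    (hl_pos : ∀ n, 0 < l n) {n k : ℕ} (hk : k ≤ n + 1) :
    (a n k - a n 0) / l n ∈ Set.Icc (0 : ℝ) 1 := by
  have hmono := h.monotoneOn_div hp hleft hright h0 hl_pos n
  have h1 : (a n (n + 1) - a n 0) / l n = 1 := by rw [← hl, div_self (hl_pos n).ne']
  refine ⟨?_, h1 ▸ hmono hk (Set.mem_Iic.2 le_rfl) hk⟩
  simpa using hmono (Set.mem_Iic.2 (Nat.zero_le _)) hk (Nat.zero_le k)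

end SplitRecursion

theorem Real.exp_neg_le_one_sub_mul {β q : ℝ} (hβ : 0 ≤ β) (hq : q ∈ Set.Icc (0 : ℝ) 1) :
    Real.exp (-β) ≤ 1 - (1 - Real.exp (-β)) * q := by
  have : Real.exp (-β) ≤ 1 := Real.exp_le_one_iff.2 (neg_nonpos.2 hβ)
  nlinarith [hq.1, hq.2]

/-- Starting from `exp (β k)` at time `n₀`, this solves the split recursion: each step multiplies
the weight by the moment generating factor `E[exp (-β ξ)]` of a `Bernoulli (p m)` variable `ξ`. -/
noncomputable def expWeight (p : ℕ → ℝ) (β : ℝ) (n₀ m k : ℕ) : ℝ :=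
  Real.exp (β * k) * ∏ j ∈ Finset.Ioc n₀ m, (1 - (1 - Real.exp (-β)) * p j)

section expWeight

variable {p : ℕ → ℝ} {β : ℝ} {n₀ m k : ℕ}

theorem expWeight_succ (hm : n₀ ≤ m) :
    expWeight p β n₀ (m + 1) (k + 1) =
      p (m + 1) * expWeight p β n₀ m k + (1 - p (m + 1)) * expWeight p β n₀ m (k + 1) := by
  have hexp : Real.exp (β * ↑(k + 1)) = Real.exp (β * k) * Real.exp β := by
    rw [← Real.exp_add]; push_cast; ring_nf
  simp only [expWeight, Finset.prod_Ioc_succ_top hm, hexp, Real.exp_neg]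
  field_simp
  ring

theorem expWeight_nonneg (hp : ∀ n, p n ∈ Set.Icc (0 : ℝ) 1) (hβ : 0 ≤ β) :
    0 ≤ expWeight p β n₀ m k :=
  mul_nonneg (Real.exp_pos _).le <| Finset.prod_nonneg fun j _ =>
    (Real.exp_pos _).le.trans (Real.exp_neg_le_one_sub_mul hβ (hp j))

theorem one_le_expWeight (hp : ∀ n, p n ∈ Set.Icc (0 : ℝ) 1) (hβ : 0 ≤ β) (hk : m - n₀ ≤ k) :
    1 ≤ expWeight p β n₀ m k := by
  have hprod :
      Real.exp (-β) ^ (m - n₀) ≤ ∏ j ∈ Finset.Ioc n₀ m, (1 - (1 - Real.exp (-β)) * p j) := by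
    rw [← Nat.card_Ioc, ← Finset.prod_const]
    exact Finset.prod_le_prod (fun _ _ => (Real.exp_pos _).le)
      fun j _ => Real.exp_neg_le_one_sub_mul hβ (hp j)
  calc 1 ≤ Real.exp (β * k) * Real.exp (-β) ^ (m - n₀) := by
        rw [← Real.exp_nat_mul, ← Real.exp_add]
        refine Real.one_le_exp ?_
        have : ((m - n₀ : ℕ) : ℝ) ≤ k := by exact_mod_cast hk
        nlinarith
    _ ≤ expWeight p β n₀ m k := by
        unfold expWeight
        gcongr

end expWeight

namespace SplitRecursion

variable {p : ℕ → ℝ} {a : ℕ → ℕ → ℝ}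

theorem le_add_mul_expWeight (h : SplitRecursion p a) (hp : ∀ n, p n ∈ Set.Icc (0 : ℝ) 1)
    (hleft : Antitone fun n => a n 0) (hright : Monotone fun n => a n (n + 1))
    (h0 : a 0 0 ≤ a 0 1) {l : ℕ → ℝ} (hl : ∀ n, l n = a n (n + 1) - a n 0)
    {β : ℝ} (hβ : 0 ≤ β) {n₀ n : ℕ} (hn : n₀ ≤ n) {k : ℕ} (hk : k ≤ n + 1) :
    a n k ≤ a n₀ 0 + l n * expWeight p β n₀ n k := by
  have hl_mono : ∀ {m}, m ≤ n → l m ≤ l n := fun hmn => by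
    rw [hl, hl]; linarith [hleft hmn, hright hmn]
  have hl_nonneg : 0 ≤ l n := by
    rw [hl]
    exact sub_nonneg.2 (h.monotoneOn hp hleft hright h0 n (by simp) (by simp) (by simp))
  have hmin_one : ∀ {m k}, m - n₀ ≤ k → min 1 (expWeight p β n₀ m k) = 1 := fun hk =>
    min_eq_left (one_le_expWeight hp hβ hk)
  -- `min 1 expWeight` is a supersolution by concavity of `min 1`, and equals `1` on the right side.
  have hbarrier := h.le_of_supersolution hp
    (b := fun m k => a n₀ 0 + l n * min 1 (expWeight p β n₀ m k)) (n := n)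
    (fun m hm k _ => by
      rw [expWeight_succ hm]
      calc _ = a n₀ 0 + l n * (p (m + 1) * min 1 (expWeight p β n₀ m k) +
            (1 - p (m + 1)) * min 1 (expWeight p β n₀ m (k + 1))) := by ring
        _ ≤ _ := by gcongr; exact convex_comb_min_one_le (hp (m + 1)))
    (fun k hk => by
      rw [hmin_one (by omega), mul_one]
      linarith [h.monotoneOn hp hleft hright h0 n₀ (by simpa using hk) (by simp) hk, hl n₀,
        hl_mono hn])
    (fun m hm => by
      have : 0 ≤ l n * min 1 (expWeight p β n₀ m 0) :=
        mul_nonneg hl_nonneg (le_min zero_le_one (expWeight_nonneg hp hβ))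
      linarith [hleft hm.1.le])
    (fun m hm => by
      rw [hmin_one (by omega), mul_one]
      linarith [hleft hm.1.le, hl m, hl_mono hm.2])
    n ⟨hn, le_rfl⟩ k hk
  exact hbarrier.trans (by gcongr; exact min_le_right _ _)

end SplitRecursion

theorem Real.mul_lt_one_sub_exp_neg_mul {β u v : ℝ} (hβ : 0 < β) (hv : 0 ≤ v)
    (h : β * u < v - u) : β * u < (1 - Real.exp (-β)) * v := by
  have hc : β / (1 + β) ≤ 1 - Real.exp (-β) := by
    rw [div_le_iff₀ (by linarith)]
    have : Real.exp (-β) * Real.exp β = 1 := by rw [← Real.exp_add]; simp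
    nlinarith [mul_le_mul_of_nonneg_left (Real.add_one_le_exp β) (Real.exp_pos (-β)).le]
  calc β * u < β / (1 + β) * v := by
        rw [div_mul_eq_mul_div, lt_div_iff₀ (by linarith)]
        nlinarith
    _ ≤ (1 - Real.exp (-β)) * v := mul_le_mul_of_nonneg_right hc hv

theorem expWeight_le_exp {p : ℕ → ℝ} (hp : ∀ n, p n ∈ Icc (0 : ℝ) 1) {β : ℝ} (hβ : 0 ≤ β)
    (n₀ m k : ℕ) :
    expWeight p β n₀ m k ≤
      Real.exp (β * k - (1 - Real.exp (-β)) * ∑ j ∈ Finset.Ioc n₀ m, p j) := by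
  have hc0 : 0 ≤ 1 - Real.exp (-β) := sub_nonneg.2 (Real.exp_le_one_iff.2 (neg_nonpos.2 hβ))
  have hc1 : 1 - Real.exp (-β) ≤ 1 := by linarith [Real.exp_pos (-β)]
  rw [sub_eq_add_neg, Real.exp_add, Finset.mul_sum]
  unfold expWeight
  gcongr
  exact Real.prod_one_sub_le_exp_neg_sum _ fun j _ =>
    (mul_le_of_le_one_right hc0 (hp j).2).trans hc1

theorem tendsto_expWeight_floor {p : ℕ → ℝ} (hp : ∀ n, p n ∈ Icc (0 : ℝ) 1) {pbar : ℝ}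
    (hcesaro : Tendsto (fun n : ℕ => (∑ k ∈ Finset.Icc 1 n, p k) / n) atTop (nhds pbar))
    {β θ η u : ℝ} (hβ : 0 ≤ β) (hθ : θ ∈ Icc (0 : ℝ) 1) (hη : 0 < η) (hu : 0 ≤ u)
    (hrate : β * u < (1 - Real.exp (-β)) * (pbar - η - θ)) :
    Tendsto (fun n : ℕ => expWeight p β ⌈θ * n⌉₊ n ⌊u * n⌋₊) atTop (nhds 0) := by
  set c := 1 - Real.exp (-β)
  have hc0 : 0 ≤ c := sub_nonneg.2 (Real.exp_le_one_iff.2 (neg_nonpos.2 hβ))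
  refine squeeze_zero' (Eventually.of_forall fun n => expWeight_nonneg hp hβ) ?_
    (Real.tendsto_exp_atBot.comp <| tendsto_atBot_add_const_right _ c <|
      tendsto_natCast_atTop_atTop.const_mul_atTop_of_neg (sub_neg.2 hrate))
  filter_upwards [hcesaro.eventually (Ioi_mem_nhds (by linarith : pbar - η < pbar)),
    eventually_gt_atTop 0] with n hces hn
  have hn_pos : (0 : ℝ) < n := by exact_mod_cast hn
  set n₀ := ⌈θ * n⌉₊
  have hn₀ : n₀ ≤ n := Nat.ceil_le.2 (mul_le_of_le_one_left hn_pos.le hθ.2)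
  have hS : (pbar - η) * n ≤ ∑ k ∈ Finset.Icc 1 n, p k := ((lt_div_iff₀ hn_pos).1 hces).le
  have hS₀ : ∑ k ∈ Finset.Icc 1 n₀, p k ≤ θ * n + 1 :=
    calc ∑ k ∈ Finset.Icc 1 n₀, p k ≤ ∑ k ∈ Finset.Icc 1 n₀, (1 : ℝ) :=
          Finset.sum_le_sum fun k _ => (hp k).2
      _ = n₀ := by simp
      _ ≤ θ * n + 1 := (Nat.ceil_lt_add_one (mul_nonneg hθ.1 hn_pos.le)).le
  have hQ : ∑ k ∈ Finset.Ioc n₀ n, p k =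
      ∑ k ∈ Finset.Icc 1 n, p k - ∑ k ∈ Finset.Icc 1 n₀, p k := by
    have e : ∀ m, Finset.Icc 1 m = Finset.Ioc 0 m := Finset.Icc_add_one_left_eq_Ioc 0
    rw [e, e, ← Finset.sum_Ioc_consecutive p n₀.zero_le hn₀, add_sub_cancel_left]
  have hK : (⌊u * n⌋₊ : ℝ) ≤ u * n := Nat.floor_le (mul_nonneg hu hn_pos.le)
  refine (expWeight_le_exp hp hβ _ _ _).trans (Real.exp_le_exp.2 ?_)
  rw [hQ]
  linear_combination mul_le_mul_of_nonneg_left hK hβ + mul_le_mul_of_nonneg_left hS hc0 +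
    mul_le_mul_of_nonneg_left hS₀ hc0

theorem tendsto_div_ceil_mul_of_tendsto_div {L : ℝ → ℝ} {l : ℕ → ℝ}
    (hL_mono : MonotoneOn L (Ici 0)) (hL_interp : ∀ n : ℕ, L n = l n) (hl_nonneg : ∀ n, 0 ≤ l n)
    {θ : ℝ} (hθ : θ ∈ Ioc (0 : ℝ) 1) (hL : Tendsto (fun t => L (t * θ) / L t) atTop (nhds 1)) :
    Tendsto (fun n : ℕ => l ⌈θ * n⌉₊ / l n) atTop (nhds 1) := by
  refine tendsto_of_tendsto_of_tendsto_of_le_of_le (hL.comp tendsto_natCast_atTop_atTop)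
    tendsto_const_nhds (fun n => ?_) fun n => ?_
  · show L (n * θ) / L n ≤ l ⌈θ * n⌉₊ / l n
    rw [hL_interp n, ← hL_interp ⌈θ * n⌉₊]
    gcongr
    · exact hl_nonneg n
    · exact hL_mono (mul_nonneg n.cast_nonneg hθ.1.le) (by simp)
        (by rw [mul_comm]; exact Nat.le_ceil _)
  · refine div_le_one_of_le₀ ?_ (hl_nonneg n)
    rw [← hL_interp, ← hL_interp]
    refine hL_mono (by simp) (by simp) ?_
    exact_mod_cast Nat.ceil_le.2 (mul_le_of_le_one_left n.cast_nonneg hθ.2)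

open Finset in
theorem tendsto_average_one_sub_div {l : ℕ → ℝ} (hl_nonneg : ∀ n, 0 ≤ l n) (hl_mono : Monotone l)
    (hratio : ∀ θ ∈ Ioc (0 : ℝ) 1, Tendsto (fun n : ℕ => l ⌈θ * n⌉₊ / l n) atTop (nhds 1)) :
    Tendsto (fun n : ℕ => (∑ m ∈ range n, (1 - l m / l n)) / n) atTop (nhds 0) := by
  have hterm_nonneg : ∀ {m n}, m ≤ n → 0 ≤ 1 - l m / l n := fun hmn =>
    sub_nonneg.2 (div_le_one_of_le₀ (hl_mono hmn) (hl_nonneg _))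
  refine tendsto_order.2 ⟨fun δ hδ => Eventually.of_forall fun n => hδ.trans_le ?_, fun δ hδ => ?_⟩
  · exact div_nonneg (sum_nonneg fun m hm => hterm_nonneg (mem_range.1 hm).le) n.cast_nonneg
  set θ := min (δ / 3) 1
  have hθ : θ ∈ Ioc (0 : ℝ) 1 := ⟨lt_min (by positivity) one_pos, min_le_right _ _⟩
  filter_upwards [(hratio θ hθ).eventually (Ioi_mem_nhds (by linarith : 1 - δ / 3 < 1)),
    tendsto_one_div_atTop_nhds_zero_nat.eventually (gt_mem_nhds (by positivity : 0 < δ / 3)),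
    eventually_ge_atTop 1] with n hratio_n hn_inv hn
  have hn_pos : (0 : ℝ) < n := by exact_mod_cast hn
  set N := ⌈θ * n⌉₊
  have hN : N ≤ n := Nat.ceil_le.2 (mul_le_of_le_one_left n.cast_nonneg hθ.2)
  have hterm : ∀ m ∈ range n,
      1 - l m / l n ≤ (if m < N then 1 else 0) + (1 - l N / l n) := fun m hm => by
    split_ifs with hmN
    · linarith [div_nonneg (hl_nonneg m) (hl_nonneg n), hterm_nonneg hN]
    · have : l N / l n ≤ l m / l n :=
        div_le_div_of_nonneg_right (hl_mono (not_lt.1 hmN)) (hl_nonneg n)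
      linarith
  have hcount : (#{m ∈ range n | m < N} : ℝ) ≤ θ * n + 1 := by
    have : #{m ∈ range n | m < N} ≤ N :=
      (Finset.card_le_card fun m hm => mem_range.2 (mem_filter.1 hm).2).trans_eq (card_range N)
    exact (Nat.cast_le.2 this).trans (Nat.ceil_lt_add_one (by positivity)).le
  rw [div_lt_iff₀ hn_pos]
  calc ∑ m ∈ range n, (1 - l m / l n)
      ≤ #{m ∈ range n | m < N} + n * (1 - l N / l n) := by
        refine (sum_le_sum hterm).trans_eq ?_
        rw [sum_add_distrib, sum_boole, sum_const, card_range, nsmul_eq_mul]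
    _ < (θ * n + 1) + n * (δ / 3) :=
        add_lt_add_of_le_of_lt hcount (mul_lt_mul_of_pos_left (by linarith) hn_pos)
    _ ≤ δ * n := by
        rw [one_div, inv_lt_iff_one_lt_mul₀ hn_pos] at hn_inv
        nlinarith [min_le_left (δ / 3) 1]

namespace SplitRecursion

open Finset

variable {p : ℕ → ℝ} {a : ℕ → ℕ → ℝ}

theorem tendsto_average (h : SplitRecursion p a) (hp : ∀ n, p n ∈ Set.Icc (0 : ℝ) 1)
    (hleft : Antitone fun n => a n 0) (hright : Monotone fun n => a n (n + 1))
    {l : ℕ → ℝ} (hl : ∀ n, l n = a n (n + 1) - a n 0) (hl_pos : ∀ n, 0 < l n) {pbar : ℝ}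
    (hcesaro : Tendsto (fun n : ℕ => (∑ m ∈ range n, p (m + 1)) / n) atTop (nhds pbar))
    (hslow : Tendsto (fun n : ℕ => (∑ m ∈ range n, (1 - l m / l n)) / n) atTop (nhds 0)) :
    Tendsto (fun n : ℕ => (∑ k ∈ range n, (a n (k + 1) - a n 0) / l n) / n) atTop
      (nhds (1 - pbar)) := by
  have hclose : ∀ n : ℕ, 0 < n → ‖(∑ k ∈ range n, (a n (k + 1) - a n 0) / l n) / n -
      (1 - (∑ m ∈ range n, p (m + 1)) / n)‖ ≤ (∑ m ∈ range n, (1 - l m / l n)) / n := by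
    intro n hn
    have hn' : (0 : ℝ) < n := by exact_mod_cast hn
    have hln := hl_pos n
    have hY : ∑ m ∈ range n, (1 - p (m + 1)) = n - ∑ m ∈ range n, p (m + 1) := by
      simp [sum_sub_distrib]
    have e1 : (∑ k ∈ range n, (a n (k + 1) - a n 0) / l n) / n -
        (1 - (∑ m ∈ range n, p (m + 1)) / n) =
        (∑ k ∈ range n, (a n (k + 1) - a n 0) - l n * ∑ m ∈ range n, (1 - p (m + 1))) /
          (l n * n) := by
      rw [← sum_div, hY]
      field_simp
    have e2 : (∑ m ∈ range n, (1 - l m / l n)) / n =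
        (∑ m ∈ range n, (l n - l m)) / (l n * n) := by
      rw [← div_div, sum_div (range n) (fun m => l n - l m) (l n)]
      exact congrArg (· / (n : ℝ)) (sum_congr rfl fun m _ => by rw [sub_div, div_self hln.ne'])
    rw [Real.norm_eq_abs, e1, e2, abs_div, abs_of_pos (mul_pos hln hn')]
    exact div_le_div_of_nonneg_right (h.abs_sum_sub_le hp hleft hright hl n) (mul_pos hln hn').le
  simpa using ((tendsto_const_nhds (x := (1 : ℝ))).sub hcesaro).add
    (squeeze_zero_norm' ((eventually_gt_atTop 0).mono hclose) hslow)

theorem div_le_one_sub_div_add_expWeight (h : SplitRecursion p a)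
    (hp : ∀ n, p n ∈ Set.Icc (0 : ℝ) 1) (hleft : Antitone fun n => a n 0)
    (hright : Monotone fun n => a n (n + 1)) (h0 : a 0 0 ≤ a 0 1) {l : ℕ → ℝ}
    (hl : ∀ n, l n = a n (n + 1) - a n 0) (hl_pos : ∀ n, 0 < l n) {β : ℝ} (hβ : 0 ≤ β)
    {n₀ n : ℕ} (hn : n₀ ≤ n) {k : ℕ} (hk : k ≤ n + 1) :
    (a n k - a n 0) / l n ≤ (1 - l n₀ / l n) + expWeight p β n₀ n k := by
  have hln := hl_pos n
  have hbarrier := h.le_add_mul_expWeight hp hleft hright h0 hl hβ hn hk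
  have hdrop : a n₀ 0 - a n 0 ≤ l n - l n₀ := by
    rw [hl, hl]; linarith [hright hn]
  have e : (1 - l n₀ / l n) * l n = l n - l n₀ := by field_simp
  rw [div_le_iff₀ hln, add_mul, e]
  linarith

theorem tendsto_div_floor (h : SplitRecursion p a) (hp : ∀ n, p n ∈ Set.Icc (0 : ℝ) 1)
    (hleft : Antitone fun n => a n 0) (hright : Monotone fun n => a n (n + 1))
    (h0 : a 0 0 ≤ a 0 1) {l : ℕ → ℝ} (hl : ∀ n, l n = a n (n + 1) - a n 0)
    (hl_pos : ∀ n, 0 < l n)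
    (hratio : ∀ θ ∈ Set.Ioc (0 : ℝ) 1, Tendsto (fun n : ℕ => l ⌈θ * n⌉₊ / l n) atTop (nhds 1))
    {pbar : ℝ} (hpbar : pbar ≤ 1)
    (hcesaro : Tendsto (fun n : ℕ => (∑ k ∈ Icc 1 n, p k) / n) atTop (nhds pbar))
    {ε : ℝ} (hε : 0 < ε) :
    Tendsto (fun n : ℕ => (a n ⌊(pbar - ε) * n⌋₊ - a n 0) / l n) atTop (nhds 0) := by
  rcases le_or_gt pbar ε with hεp | hεp
  · refine tendsto_const_nhds.congr fun n => ?_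
    rw [Nat.floor_of_nonpos (mul_nonpos_of_nonpos_of_nonneg (by linarith) n.cast_nonneg)]
    simp
  have hK : ∀ n : ℕ, ⌊(pbar - ε) * n⌋₊ ≤ n + 1 := fun n => by
    have : ⌊(pbar - ε) * n⌋₊ ≤ n := Nat.floor_le_of_le (by nlinarith [n.cast_nonneg (α := ℝ)])
    omega
  have hn₀ : ∀ n : ℕ, ⌈ε / 4 * n⌉₊ ≤ n := fun n =>
    Nat.ceil_le.2 (by nlinarith [n.cast_nonneg (α := ℝ)])
  have hbound : ∀ n : ℕ, (a n ⌊(pbar - ε) * n⌋₊ - a n 0) / l n ≤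
      (1 - l ⌈ε / 4 * n⌉₊ / l n) + expWeight p (ε / 4) ⌈ε / 4 * n⌉₊ n ⌊(pbar - ε) * n⌋₊ :=
    fun n => h.div_le_one_sub_div_add_expWeight hp hleft hright h0 hl hl_pos (by positivity)
      (hn₀ n) (hK n)
  have hrate : ε / 4 * (pbar - ε) < (1 - Real.exp (-(ε / 4))) * (pbar - ε / 4 - ε / 4) :=
    Real.mul_lt_one_sub_exp_neg_mul (by positivity) (by linarith)
      (by nlinarith [mul_pos hε (by linarith : (0 : ℝ) < 2 - (pbar - ε))])
  have hfirst : Tendsto (fun n : ℕ => 1 - l ⌈ε / 4 * n⌉₊ / l n) atTop (nhds 0) := by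
    simpa using (tendsto_const_nhds (x := (1 : ℝ))).sub
      (hratio (ε / 4) ⟨by positivity, by linarith⟩)
  exact squeeze_zero (fun n => (h.div_mem_Icc hp hleft hright h0 hl hl_pos (hK n)).1) hbound
    (by simpa only [add_zero] using hfirst.add (tendsto_expWeight_floor hp hcesaro
      (by positivity) ⟨by positivity, by linarith⟩ (by positivity) (by linarith) hrate))

end SplitRecursion

theorem integral_empiricalMeasure (α : ℕ → ℕ → ℝ) (n : ℕ) (f : ℝ → ℝ) :
    ∫ x, f x ∂(empiricalMeasure α n) = (∑ k ∈ Finset.Icc 1 n, f (α n k)) / n := by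
  rw [empiricalMeasure, integral_smul_measure,
    integral_finsetSum_measure fun k _ => integrable_dirac enorm_lt_top]
  simp [integral_dirac, div_eq_inv_mul]

theorem integral_smul_dirac_add_smul_dirac {β : Type*} [MeasurableSpace β]
    [MeasurableSingletonClass β] {q : ℝ} (hq : q ∈ Icc (0 : ℝ) 1) (f : β → ℝ) (x y : β) :
    ∫ z, f z ∂(ENNReal.ofReal q • Measure.dirac x + ENNReal.ofReal (1 - q) • Measure.dirac y) =
      q * f x + (1 - q) * f y := by
  rw [integral_add_measure ((integrable_dirac enorm_lt_top).smul_measure ENNReal.ofReal_ne_top)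
      ((integrable_dirac enorm_lt_top).smul_measure ENNReal.ofReal_ne_top),
    integral_smul_measure, integral_smul_measure, integral_dirac, integral_dirac,
    ENNReal.toReal_ofReal hq.1, ENNReal.toReal_ofReal (sub_nonneg.2 hq.2), smul_eq_mul, smul_eq_mul]

theorem exists_abs_le_add_mul_mul_one_sub {g : ℝ → ℝ} (hg : ContinuousOn g (Icc 0 1))
    (hg0 : g 0 = 0) (hg1 : g 1 = 0) {E : ℝ} (hE : 0 < E) :
    ∃ C, ∀ x ∈ Icc (0 : ℝ) 1, |g x| ≤ E + C * (x * (1 - x)) := by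
  obtain ⟨δ₀, hδ₀, hg0'⟩ := Metric.continuousWithinAt_iff.1
    (hg 0 (left_mem_Icc.2 zero_le_one)) E hE
  obtain ⟨δ₁, hδ₁, hg1'⟩ := Metric.continuousWithinAt_iff.1
    (hg 1 (right_mem_Icc.2 zero_le_one)) E hE
  obtain ⟨G, hG⟩ := isCompact_Icc.exists_bound_of_continuousOn hg
  have hG0 : 0 ≤ G := by simpa [hg0] using hG 0 (left_mem_Icc.2 zero_le_one)
  set δ := min δ₀ δ₁
  have hδ : 0 < δ := lt_min hδ₀ hδ₁
  refine ⟨G / δ ^ 2, fun x hx => ?_⟩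
  have hC : 0 ≤ G / δ ^ 2 * (x * (1 - x)) :=
    mul_nonneg (by positivity) (mul_nonneg hx.1 (sub_nonneg.2 hx.2))
  by_cases hx0 : x < δ
  · have := hg0' hx <| by
      rw [Real.dist_eq, sub_zero, abs_of_nonneg hx.1]; exact hx0.trans_le (min_le_left _ _)
    rw [Real.dist_eq, hg0, sub_zero] at this
    linarith
  by_cases hx1 : 1 - x < δ
  · have := hg1' hx <| by
      rw [Real.dist_eq, abs_sub_comm, abs_of_nonneg (sub_nonneg.2 hx.2)]
      exact hx1.trans_le (min_le_right _ _)
    rw [Real.dist_eq, hg1, sub_zero] at this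
    linarith
  push Not at hx0 hx1
  have : G ≤ G / δ ^ 2 * (x * (1 - x)) := by
    rw [div_mul_eq_mul_div, le_div_iff₀ (by positivity)]
    exact mul_le_mul_of_nonneg_left (by nlinarith) hG0
  linarith [hG x hx, Real.norm_eq_abs (g x)]

open Finset in
theorem tendsto_average_mul_one_sub {x : ℕ → ℕ → ℝ}
    (hx : ∀ n, ∀ k ∈ Finset.Icc 1 n, x n k ∈ Icc (0 : ℝ) 1) {q : ℝ}
    (hmean : Tendsto (fun n : ℕ => (∑ k ∈ Finset.Icc 1 n, x n k) / n) atTop (nhds (1 - q)))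
    (hlow : ∀ ε > 0, ∀ᶠ n : ℕ in atTop, (q - ε) * n ≤ #{k ∈ Finset.Icc 1 n | x n k ≤ ε}) :
    Tendsto (fun n : ℕ => (∑ k ∈ Finset.Icc 1 n, x n k * (1 - x n k)) / n) atTop (nhds 0) := by
  have hq : q ≤ 1 := by
    have := ge_of_tendsto' hmean fun n =>
      div_nonneg (sum_nonneg fun k hk => (hx n k hk).1) n.cast_nonneg
    linarith
  refine tendsto_order.2 ⟨fun δ hδ => Eventually.of_forall fun n => hδ.trans_le <|
    div_nonneg (sum_nonneg fun k hk => mul_nonneg (hx n k hk).1 (sub_nonneg.2 (hx n k hk).2))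
      n.cast_nonneg, fun δ hδ => ?_⟩
  set ε := min (δ / 4) (1 / 2)
  have hε : 0 < ε := lt_min (by positivity) one_half_pos
  filter_upwards [hlow ε hε, hmean.eventually (Ioi_mem_nhds (by linarith : 1 - q - ε < 1 - q)),
    eventually_gt_atTop 0] with n hcount hmean_n hn
  have hn' : (0 : ℝ) < n := by exact_mod_cast hn
  have hpoint : ∀ k ∈ Finset.Icc 1 n,
      x n k * (1 - x n k) ≤ 1 - x n k - (1 - 2 * ε) * (if x n k ≤ ε then 1 else 0) := by
    intro k hk
    obtain ⟨h0, h1⟩ := hx n k hk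
    split_ifs with hxε
    · nlinarith
    · nlinarith
  have hsum : ∑ k ∈ Finset.Icc 1 n, x n k * (1 - x n k) ≤
      n - ∑ k ∈ Finset.Icc 1 n, x n k - (1 - 2 * ε) * #{k ∈ Finset.Icc 1 n | x n k ≤ ε} := by
    refine (sum_le_sum hpoint).trans_eq ?_
    rw [sum_sub_distrib, sum_sub_distrib, ← mul_sum, sum_boole, sum_const, Nat.card_Icc]
    simp
  have hε2 : ε ≤ 1 / 2 := min_le_right _ _
  have hεδ : ε ≤ δ / 4 := min_le_left _ _
  rw [div_lt_iff₀ hn']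
  rw [lt_div_iff₀ hn'] at hmean_n
  nlinarith [mul_le_mul_of_nonneg_left hcount (by linarith : (0 : ℝ) ≤ 1 - 2 * ε),
    mul_nonneg (mul_nonneg hε.le (sub_nonneg.2 hq)) hn'.le, mul_nonneg (sq_nonneg ε) hn'.le,
    mul_le_mul_of_nonneg_right hεδ hn'.le]

open Finset in
theorem tendsto_average_comp {x : ℕ → ℕ → ℝ}
    (hx : ∀ n, ∀ k ∈ Finset.Icc 1 n, x n k ∈ Icc (0 : ℝ) 1) {q : ℝ}
    (hmean : Tendsto (fun n : ℕ => (∑ k ∈ Finset.Icc 1 n, x n k) / n) atTop (nhds (1 - q)))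
    (hvar : Tendsto (fun n : ℕ => (∑ k ∈ Finset.Icc 1 n, x n k * (1 - x n k)) / n) atTop (nhds 0))
    {f : ℝ → ℝ} (hf : ContinuousOn f (Icc 0 1)) :
    Tendsto (fun n : ℕ => (∑ k ∈ Finset.Icc 1 n, f (x n k)) / n) atTop
      (nhds (q * f 0 + (1 - q) * f 1)) := by
  set g : ℝ → ℝ := fun y => f y - ((1 - y) * f 0 + y * f 1)
  have hg : ContinuousOn g (Icc 0 1) := hf.sub (by fun_prop)
  have hgsum : Tendsto (fun n : ℕ => (∑ k ∈ Finset.Icc 1 n, g (x n k)) / n) atTop (nhds 0) := by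
    refine Metric.tendsto_nhds.2 fun E hE => ?_
    obtain ⟨C, hC⟩ := exists_abs_le_add_mul_mul_one_sub hg (by simp [g]) (by simp [g]) (half_pos hE)
    have hCE : C * 0 < E / 2 := by simpa using half_pos hE
    filter_upwards [(hvar.const_mul C).eventually (gt_mem_nhds hCE), eventually_gt_atTop 0]
      with n hvar_n hn
    have hn' : (0 : ℝ) < n := by exact_mod_cast hn
    rw [← mul_div_assoc, div_lt_iff₀ hn'] at hvar_n
    rw [Real.dist_eq, sub_zero, abs_div, abs_of_pos hn', div_lt_iff₀ hn']
    calc |∑ k ∈ Finset.Icc 1 n, g (x n k)| ≤ ∑ k ∈ Finset.Icc 1 n, |g (x n k)| :=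
          abs_sum_le_sum_abs _ _
      _ ≤ ∑ k ∈ Finset.Icc 1 n, (E / 2 + C * (x n k * (1 - x n k))) :=
          sum_le_sum fun k hk => hC _ (hx n k hk)
      _ = E / 2 * n + C * ∑ k ∈ Finset.Icc 1 n, x n k * (1 - x n k) := by
          rw [sum_add_distrib, sum_const, Nat.card_Icc, ← mul_sum]
          simp [mul_comm]
      _ < E * n := by linarith
  have hlin := (hgsum.add (((tendsto_const_nhds (x := (1 : ℝ))).sub hmean).const_mul (f 0))).add
    (hmean.const_mul (f 1))
  refine (hlin.congr' ?_).trans_eq (by ring_nf)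
  filter_upwards [eventually_gt_atTop 0] with n hn
  have hn' : (n : ℝ) ≠ 0 := by positivity
  simp only [g, sum_sub_distrib, sum_add_distrib, ← sum_mul, sum_const, Nat.card_Icc,
    add_tsub_cancel_right, nsmul_eq_mul]
  field_simp
  ring

open Finset in
theorem eventually_le_card_filter_le {x : ℕ → ℕ → ℝ} (hmono : ∀ n, MonotoneOn (x n) (Set.Iic n))
    {q : ℝ} (hq : q ≤ 1)
    (htail : ∀ ε > 0, Tendsto (fun n : ℕ => x n ⌊(q - ε) * n⌋₊) atTop (nhds 0)) :
    ∀ ε > 0, ∀ᶠ n : ℕ in atTop, (q - ε) * n ≤ #{k ∈ Finset.Icc 1 n | x n k ≤ ε} := by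
  intro ε hε
  filter_upwards [(htail (ε / 2) (half_pos hε)).eventually (gt_mem_nhds hε),
    eventually_ge_atTop ⌈2 / ε⌉₊] with n hxK hn
  set K := ⌊(q - ε / 2) * n⌋₊
  have hKn : K ≤ n := Nat.floor_le_of_le (by nlinarith [n.cast_nonneg (α := ℝ)])
  have hsub : Finset.Icc 1 K ⊆ {k ∈ Finset.Icc 1 n | x n k ≤ ε} := fun k hk => by
    obtain ⟨hk1, hkK⟩ := Finset.mem_Icc.1 hk
    exact Finset.mem_filter.2 ⟨Finset.mem_Icc.2 ⟨hk1, hkK.trans hKn⟩,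
      (hmono n (Set.mem_Iic.2 (hkK.trans hKn)) (Set.mem_Iic.2 hKn) hkK).trans hxK.le⟩
  have hcard : (K : ℝ) ≤ #{k ∈ Finset.Icc 1 n | x n k ≤ ε} := by
    exact_mod_cast (Finset.card_le_card hsub).trans_eq' (by simp)
  have hεn : 2 ≤ ε * n := by
    have := (div_le_iff₀ hε).1 ((Nat.le_ceil _).trans (Nat.cast_le.2 hn))
    linarith
  linarith [Nat.sub_one_lt_floor ((q - ε / 2) * n)]

theorem deterministic_stratified_slowly_varying_general
    (p : ℕ → ℝ) (hp : ∀ n, p n ∈ Icc (0:ℝ) 1)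
    (a : ℕ → ℕ → ℝ)
    (ha_anti : Antitone fun n => a n 0)
    (ha_mono : Monotone fun n => a n (n + 1))
    (ha_pos : a 0 0 < a 0 1)
    (harec : ∀ n : ℕ, 1 ≤ n → ∀ k : ℕ, 1 ≤ k → k ≤ n →
      a n k = p n * a (n - 1) (k - 1) + (1 - p n) * a (n - 1) k)
    (l : ℕ → ℝ) (hl : ∀ n, l n = a n (n + 1) - a n 0)
    (pbar : ℝ)
    (hcesaro : Tendsto (fun n : ℕ => (∑ k ∈ Finset.Icc 1 n, p k) / n) atTop (nhds pbar))
    (L : ℝ → ℝ)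
    (hL_mono : MonotoneOn L (Ici (0:ℝ)))
    (hL_interp : ∀ n : ℕ, L n = l n)
    (hL_slow : ∀ x : ℝ, 0 < x →
      Tendsto (fun t : ℝ => L (t * x) / L t) atTop (nhds 1))
    (α : ℕ → ℕ → ℝ) (hα : ∀ n k, α n k = (a n k - a n 0) / l n) :
    ∀ f : BoundedContinuousFunction ℝ ℝ,
      Tendsto (fun n : ℕ => ∫ x, f x ∂(empiricalMeasure α n)) atTop
        (nhds (∫ x, f x ∂(ENNReal.ofReal pbar • Measure.dirac (0:ℝ) +
          ENNReal.ofReal (1 - pbar) • Measure.dirac (1:ℝ)))) := by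
  intro f
  have hrec : SplitRecursion p a := fun n k hk => by
    simpa using harec (n + 1) (by omega) (k + 1) (by omega) (by omega)
  have hl_mono : Monotone l := fun m n hmn => by
    rw [hl, hl]; linarith [ha_anti hmn, ha_mono hmn]
  have hl_pos : ∀ n, 0 < l n := fun n =>
    (show 0 < l 0 by rw [hl]; simpa using ha_pos).trans_le (hl_mono n.zero_le)
  have hα_mono : ∀ n, MonotoneOn (α n) (Iic n) := fun n => by
    simpa only [← hα] using (hrec.monotoneOn_div hp ha_anti ha_mono ha_pos.le hl_pos n).mono
      (Iic_subset_Iic.2 n.le_succ)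
  have hα_mem : ∀ n, ∀ k ∈ Finset.Icc 1 n, α n k ∈ Icc (0 : ℝ) 1 := fun n k hk =>
    hα n k ▸ hrec.div_mem_Icc hp ha_anti ha_mono ha_pos.le hl hl_pos
      (by linarith [(Finset.mem_Icc.1 hk).2])
  have hpbar := mem_Icc_of_tendsto_average hp hcesaro
  have hratio : ∀ θ ∈ Ioc (0 : ℝ) 1, Tendsto (fun n : ℕ => l ⌈θ * n⌉₊ / l n) atTop (nhds 1) :=
    fun θ hθ => tendsto_div_ceil_mul_of_tendsto_div hL_mono hL_interp (fun n => (hl_pos n).le) hθ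
      (hL_slow θ hθ.1)
  have hmean :
      Tendsto (fun n : ℕ => (∑ k ∈ Finset.Icc 1 n, α n k) / n) atTop (nhds (1 - pbar)) := by
    simpa only [Finset.sum_Icc_one_eq_sum_range, hα] using
      hrec.tendsto_average hp ha_anti ha_mono hl hl_pos
        (by simpa only [Finset.sum_Icc_one_eq_sum_range] using hcesaro)
        (tendsto_average_one_sub_div (fun n => (hl_pos n).le) hl_mono hratio)
  have htail : ∀ ε > 0, Tendsto (fun n : ℕ => α n ⌊(pbar - ε) * n⌋₊) atTop (nhds 0) :=
    fun ε hε => by simpa only [hα] using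
      hrec.tendsto_div_floor hp ha_anti ha_mono ha_pos.le hl hl_pos hratio hpbar.2 hcesaro hε
  have hvar := tendsto_average_mul_one_sub hα_mem hmean
    (eventually_le_card_filter_le hα_mono hpbar.2 htail)
  rw [integral_smul_dirac_add_smul_dirac hpbar]
  simpa only [integral_empiricalMeasure] using
    tendsto_average_comp hα_mem hmean hvar f.continuous.continuousOn

/-- **Deterministic stratified fragmentation, slowly varying case.** If `p_{n,k} = p_n`
with Cesàro mean `p̄` and the interval lengths `l_n` are slowly varying, then the empirical
measures of the normalized break points converge weakly to `p̄ δ_0 + (1-p̄) δ_1`. -/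
theorem deterministic_stratified_slowly_varying
    (p : ℕ → ℝ) (hp : ∀ n, p n ∈ Icc (0:ℝ) 1)
    (a : ℕ → ℕ → ℝ)
    (ha_anti : Antitone fun n => a n 0)
    (ha_mono : Monotone fun n => a n (n + 1))
    (ha_pos : a 0 0 < a 0 1)
    (harec : ∀ n : ℕ, 1 ≤ n → ∀ k : ℕ, 1 ≤ k → k ≤ n →
      a n k = p n * a (n - 1) (k - 1) + (1 - p n) * a (n - 1) k)
    (l : ℕ → ℝ) (hl : ∀ n, l n = a n (n + 1) - a n 0)
    (pbar : ℝ)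
    (hcesaro : Tendsto (fun n : ℕ => (∑ k ∈ Finset.Icc 1 n, p k) / n) atTop (nhds pbar))
    (L : ℝ → ℝ) (hL_nonneg : ∀ x : ℝ, 0 ≤ x → 0 ≤ L x)
    (hL_mono : MonotoneOn L (Ici (0:ℝ)))
    (hL_interp : ∀ n : ℕ, L n = l n)
    (hL_slow : ∀ x : ℝ, 0 < x →
      Tendsto (fun t : ℝ => L (t * x) / L t) atTop (nhds 1))
    (α : ℕ → ℕ → ℝ) (hα : ∀ n k, α n k = (a n k - a n 0) / l n) :
    ∀ f : BoundedContinuousFunction ℝ ℝ,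
      Tendsto (fun n : ℕ => ∫ x, f x ∂(empiricalMeasure α n)) atTop
        (nhds (∫ x, f x ∂(ENNReal.ofReal pbar • Measure.dirac (0:ℝ) +
          ENNReal.ofReal (1 - pbar) • Measure.dirac (1:ℝ)))) :=
  deterministic_stratified_slowly_varying_general p hp a ha_anti ha_mono ha_pos harec l hl pbar
    hcesaro L hL_mono hL_interp hL_slow α hα
end
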